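/- arXiv:1310.8631 — 3 statements merged into one kernel-verified Lean document; each statement's English description precedes it below -/
import Mathlib

section
/- For every odd Δ ≥ 3, (1/(Δ·2^Δ)) · Σ_{k=0}^{Δ} C(Δ,k) · min{Δ/2, k} = (1/((Δ-1)·2^{Δ-1})) · Σ_{k=0}^{Δ-1} C(Δ-1,k) · min{(Δ-1)/2, k}. -/
open Finset

private lemma sumDerivAux (n r : ℕ) :
    ∑ i ∈ range (r + 1), i * Nat.choose (n + 1) i
      = (n + 1) * ∑ i ∈ range r, Nat.choose n i := by
  rw [Finset.sum_range_succ', Finset.mul_sum]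
  simp only [zero_mul, add_zero]
  refine Finset.sum_congr rfl fun i _ => ?_
  rw [mul_comm (i + 1), ← Nat.add_one_mul_choose_eq]

theorem stmt2 (Δ : ℕ) (hΔ : 3 ≤ Δ) (hodd : Odd Δ) :
    (1 / ((Δ : ℚ) * 2 ^ Δ)) *
      ∑ k ∈ Finset.range (Δ + 1), (Nat.choose Δ k : ℚ) * min ((Δ : ℚ) / 2) (k : ℚ) =
    (1 / (((Δ - 1 : ℕ) : ℚ) * 2 ^ (Δ - 1))) *
      ∑ k ∈ Finset.range ((Δ - 1) + 1),
        (Nat.choose (Δ - 1) k : ℚ) * min (((Δ - 1 : ℕ) : ℚ) / 2) (k : ℚ) := by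
  obtain ⟨m, rfl⟩ := hodd
  obtain ⟨t, rfl⟩ : ∃ t, m = t + 1 := ⟨m - 1, by omega⟩
  simp only [show 2 * (t + 1) + 1 = 2 * t + 3 from by ring,
    show 2 * t + 3 - 1 = 2 * t + 2 from by omega]
  set A : ℕ := ∑ j ∈ range (t + 1), Nat.choose (2 * t + 2) j with hA
  -- symmetry: upper half of odd row
  have h2 : ∑ i ∈ range (t + 2), Nat.choose (2 * t + 3) (t + 2 + i)
      = ∑ j ∈ range (t + 2), Nat.choose (2 * t + 3) j := by
    rw [← Finset.sum_range_reflect (fun j => Nat.choose (2 * t + 3) j) (t + 2)]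
    refine Finset.sum_congr rfl fun i hi => ?_
    rw [Finset.mem_range] at hi
    rw [show t + 2 - 1 - i = 2 * t + 3 - (t + 2 + i) from by omega,
      Nat.choose_symm (by omega)]
  have h4 : ∑ j ∈ range (t + 2), Nat.choose (2 * t + 3) j = 4 ^ (t + 1) := by
    have := Nat.sum_range_choose_halfway (t + 1)
    simpa [show 2 * (t + 1) + 1 = 2 * t + 3 from by ring] using this
  -- symmetry: upper part of even row
  have h3 : ∑ i ∈ range (t + 1), Nat.choose (2 * t + 2) (t + 2 + i) = A := by
    rw [hA, ← Finset.sum_range_reflect (fun j => Nat.choose (2 * t + 2) j) (t + 1)]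
    refine Finset.sum_congr rfl fun i hi => ?_
    rw [Finset.mem_range] at hi
    rw [show t + 1 - 1 - i = 2 * t + 2 - (t + 2 + i) from by omega,
      Nat.choose_symm (by omega)]
  have h5 : ∑ i ∈ range (t + 1), Nat.choose (2 * t + 1) i = 4 ^ t :=
    Nat.sum_range_choose_halfway t
  -- derivative sums
  have h1 : ∑ i ∈ range (t + 2), i * Nat.choose (2 * t + 3) i = (2 * t + 3) * A := by
    have := sumDerivAux (2 * t + 2) (t + 1)
    simpa using this
  have h6 : ∑ i ∈ range (t + 2), i * Nat.choose (2 * t + 2) i = (2 * t + 2) * 4 ^ t := by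
    have := sumDerivAux (2 * t + 1) (t + 1)
    rw [h5] at this
    simpa [show 2 * t + 1 + 1 = 2 * t + 2 from by ring] using this
  -- LHS sum
  have hL : ∑ k ∈ range (2 * t + 3 + 1),
      (Nat.choose (2 * t + 3) k : ℚ) * min (((2 * t + 3 : ℕ) : ℚ) / 2) (k : ℚ)
      = ((2 * t + 3) * A : ℕ) + (((2 * t + 3 : ℕ) : ℚ) / 2) * (4 ^ (t + 1) : ℕ) := by
    rw [show 2 * t + 3 + 1 = (t + 2) + (t + 2) from by ring, Finset.sum_range_add]
    have e1 : ∑ i ∈ range (t + 2),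
        (Nat.choose (2 * t + 3) i : ℚ) * min (((2 * t + 3 : ℕ) : ℚ) / 2) (i : ℚ)
        = ((∑ i ∈ range (t + 2), i * Nat.choose (2 * t + 3) i : ℕ) : ℚ) := by
      push_cast
      refine Finset.sum_congr rfl fun i hi => ?_
      rw [Finset.mem_range] at hi
      have hiq : (i : ℚ) ≤ t + 1 := by exact_mod_cast (by omega : i ≤ t + 1)
      rw [min_eq_right (by push_cast; linarith)]
      ring
    have e2 : ∑ i ∈ range (t + 2),
        (Nat.choose (2 * t + 3) (t + 2 + i) : ℚ) *
          min (((2 * t + 3 : ℕ) : ℚ) / 2) ((t + 2 + i : ℕ) : ℚ)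
        = (((2 * t + 3 : ℕ) : ℚ) / 2) *
            ((∑ i ∈ range (t + 2), Nat.choose (2 * t + 3) (t + 2 + i) : ℕ) : ℚ) := by
      push_cast
      rw [Finset.mul_sum]
      refine Finset.sum_congr rfl fun i hi => ?_
      rw [min_eq_left (by push_cast; linarith [Nat.cast_nonneg (α := ℚ) i])]
      ring
    rw [e1, e2, h1, h2, h4]
  -- RHS sum
  have hR : ∑ k ∈ range (2 * t + 2 + 1),
      (Nat.choose (2 * t + 2) k : ℚ) * min (((2 * t + 2 : ℕ) : ℚ) / 2) (k : ℚ)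
      = ((2 * t + 2) * 4 ^ t : ℕ) + (((2 * t + 2 : ℕ) : ℚ) / 2) * (A : ℕ) := by
    rw [show 2 * t + 2 + 1 = (t + 2) + (t + 1) from by ring, Finset.sum_range_add]
    have e1 : ∑ i ∈ range (t + 2),
        (Nat.choose (2 * t + 2) i : ℚ) * min (((2 * t + 2 : ℕ) : ℚ) / 2) (i : ℚ)
        = ((∑ i ∈ range (t + 2), i * Nat.choose (2 * t + 2) i : ℕ) : ℚ) := by
      push_cast
      refine Finset.sum_congr rfl fun i hi => ?_
      rw [Finset.mem_range] at hi
      have hiq : (i : ℚ) ≤ t + 1 := by exact_mod_cast (by omega : i ≤ t + 1)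
      rw [min_eq_right (by push_cast; linarith)]
      ring
    have e2 : ∑ i ∈ range (t + 1),
        (Nat.choose (2 * t + 2) (t + 2 + i) : ℚ) *
          min (((2 * t + 2 : ℕ) : ℚ) / 2) ((t + 2 + i : ℕ) : ℚ)
        = (((2 * t + 2 : ℕ) : ℚ) / 2) *
            ((∑ i ∈ range (t + 1), Nat.choose (2 * t + 2) (t + 2 + i) : ℕ) : ℚ) := by
      push_cast
      rw [Finset.mul_sum]
      refine Finset.sum_congr rfl fun i hi => ?_
      rw [min_eq_left (by push_cast; linarith [Nat.cast_nonneg (α := ℚ) i])]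
      ring
    rw [e1, e2, h6, h3]
  rw [hL, hR]
  push_cast
  have ht2 : (2 : ℚ) ^ (2 * t + 3) ≠ 0 := by positivity
  have ht3 : (2 : ℚ) ^ (2 * t + 2) ≠ 0 := by positivity
  field_simp
  ring
end

section
/- Define β_k = Σ_{x₁=1}^{k} Σ_{x₂=1}^{k} max{ max(x₁,x₂)/2, min(x₁,x₂) } as a rational. Then the sequence β_k / k³ converges to 5/12 as k → ∞, and consequently 1 - β_k/k³ converges to 7/12. -/
def beta (k : ℕ) : ℚ :=
  ∑ x₁ ∈ Finset.Icc 1 k, ∑ x₂ ∈ Finset.Icc 1 k,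
    max ((max x₁ x₂ : ℕ) / 2 : ℚ) ((min x₁ x₂ : ℕ) : ℚ)

lemma gauss (j : ℕ) : ∑ x ∈ Finset.Ioc 0 j, (x : ℚ) = j * (j + 1) / 2 := by
  induction j with
  | zero => simp
  | succ n ih =>
    rw [Finset.sum_Ioc_succ_top (Nat.zero_le n), ih]
    push_cast
    ring

lemma sum_max_half (n : ℕ) :
    ∑ x ∈ Finset.Icc 1 n, max ((n : ℚ) / 2) (x : ℚ)
      = (5 * n ^ 2 + 2 * n + (if Even n then 0 else 1)) / 8 := by
  have hIcc : Finset.Icc 1 n = Finset.Ioc 0 n := rfl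
  set m := n / 2 with hm
  have hmn : m ≤ n := Nat.div_le_self _ _
  have hsplit := Finset.sum_Ioc_consecutive (f := fun x : ℕ => max ((n : ℚ) / 2) (x : ℚ))
      (Nat.zero_le m) hmn
  have hlow : ∑ x ∈ Finset.Ioc 0 m, max ((n : ℚ) / 2) (x : ℚ)
      = m * ((n : ℚ) / 2) := by
    rw [Finset.sum_congr rfl (fun x hx => ?_), Finset.sum_const, Nat.card_Ioc, Nat.sub_zero,
      nsmul_eq_mul]
    have hx2 : 2 * x ≤ n := by
      have := (Finset.mem_Ioc.mp hx).2
      omega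
    have hx2' : (2 : ℚ) * x ≤ n := by exact_mod_cast hx2
    have : (x : ℚ) ≤ (n : ℚ) / 2 := by linarith
    exact max_eq_left this
  have hhigh : ∑ x ∈ Finset.Ioc m n, max ((n : ℚ) / 2) (x : ℚ)
      = ∑ x ∈ Finset.Ioc m n, (x : ℚ) := by
    refine Finset.sum_congr rfl fun x hx => ?_
    have hx2 : n ≤ 2 * x := by
      have := (Finset.mem_Ioc.mp hx).1
      omega
    have hx2' : (n : ℚ) ≤ 2 * x := by exact_mod_cast hx2
    have : (n : ℚ) / 2 ≤ (x : ℚ) := by linarith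
    exact max_eq_right this
  have hhigh2 : ∑ x ∈ Finset.Ioc m n, (x : ℚ) = n * (n + 1) / 2 - m * (m + 1) / 2 := by
    have := Finset.sum_Ioc_consecutive (f := fun x : ℕ => (x : ℚ)) (Nat.zero_le m) hmn
    rw [gauss, gauss] at this
    linarith
  rw [hIcc, ← hsplit, hlow, hhigh, hhigh2]
  rcases Nat.even_or_odd n with h | h
  · obtain ⟨t, ht⟩ := h
    have hmt : m = t := by omega
    rw [if_pos ⟨t, ht⟩, hmt, ht]
    push_cast
    ring
  · obtain ⟨t, ht⟩ := h
    have hmt : m = t := by omega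
    rw [if_neg (Nat.not_even_iff_odd.mpr ⟨t, ht⟩), hmt, ht]
    push_cast
    ring

lemma beta_succ (k : ℕ) :
    beta (k + 1) = beta k
      + 2 * (∑ x ∈ Finset.Icc 1 (k + 1), max (((k : ℚ) + 1) / 2) (x : ℚ)) - (k + 1) := by
  have hterm : ∀ x ∈ Finset.Icc 1 (k + 1),
      max ((max x (k + 1) : ℕ) / 2 : ℚ) ((min x (k + 1) : ℕ) : ℚ)
        = max (((k : ℚ) + 1) / 2) (x : ℚ) := by
    intro x hx
    have hxk : x ≤ k + 1 := (Finset.mem_Icc.mp hx).2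
    rw [max_eq_right hxk, min_eq_left hxk]
    push_cast
    ring_nf
  have hterm' : ∀ x ∈ Finset.Icc 1 (k + 1),
      max ((max (k + 1) x : ℕ) / 2 : ℚ) ((min (k + 1) x : ℕ) : ℚ)
        = max (((k : ℚ) + 1) / 2) (x : ℚ) := by
    intro x hx
    rw [max_comm (k+1) x, min_comm (k+1) x]
    exact hterm x hx
  unfold beta
  rw [Finset.sum_Icc_succ_top (Nat.one_le_iff_ne_zero.mpr (Nat.succ_ne_zero k)),
    Finset.sum_congr rfl hterm']
  have hinner : ∀ x₁ ∈ Finset.Icc 1 k,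
      (∑ x₂ ∈ Finset.Icc 1 (k + 1),
        max ((max x₁ x₂ : ℕ) / 2 : ℚ) ((min x₁ x₂ : ℕ) : ℚ))
      = (∑ x₂ ∈ Finset.Icc 1 k,
        max ((max x₁ x₂ : ℕ) / 2 : ℚ) ((min x₁ x₂ : ℕ) : ℚ))
        + max (((k : ℚ) + 1) / 2) (x₁ : ℚ) := by
    intro x₁ hx₁
    rw [Finset.sum_Icc_succ_top (Nat.one_le_iff_ne_zero.mpr (Nat.succ_ne_zero k))]
    congr 1
    have hx₁' := Finset.mem_Icc.mp hx₁
    exact hterm x₁ (Finset.mem_Icc.mpr ⟨hx₁'.1, by omega⟩)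
  rw [Finset.sum_congr rfl hinner, Finset.sum_add_distrib]
  have hlast : ∑ x ∈ Finset.Icc 1 (k + 1), max (((k : ℚ) + 1) / 2) (x : ℚ)
      = (∑ x ∈ Finset.Icc 1 k, max (((k : ℚ) + 1) / 2) (x : ℚ)) + ((k : ℚ) + 1) := by
    rw [Finset.sum_Icc_succ_top (Nat.one_le_iff_ne_zero.mpr (Nat.succ_ne_zero k))]
    congr 1
    push_cast
    rw [max_eq_right]
    linarith
  rw [hlast]
  ring

lemma beta_formula (k : ℕ) :
    beta k = (10 * k ^ 3 + 9 * k ^ 2 + 2 * k + (if Even k then 0 else 3)) / 24 := by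
  induction k with
  | zero => simp [beta]
  | succ n ih =>
    have hc := sum_max_half (n + 1)
    have hcast : (((n : ℕ) + 1 : ℕ) : ℚ) = (n : ℚ) + 1 := by push_cast; ring
    rw [hcast] at hc
    rw [beta_succ, ih, hc]
    rcases Nat.even_or_odd n with h | h
    · have h1 : ¬ Even (n + 1) := by simp [Nat.even_add_one, h]
      rw [if_pos h, if_neg h1, if_neg (by simpa [Nat.even_add_one] using h)]
      push_cast
      ring
    · have h0 : ¬ Even n := Nat.not_even_iff_odd.mpr h
      have h1 : Even (n + 1) := by simpa [Nat.even_add_one] using h0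
      rw [if_neg h0, if_pos h1, if_pos (by simpa [Nat.even_add_one] using h0)]
      push_cast
      ring

theorem stmt16 :
    Filter.Tendsto (fun k : ℕ => ((beta k : ℝ)) / (k : ℝ) ^ 3) Filter.atTop
      (nhds (5 / 12)) ∧
    Filter.Tendsto (fun k : ℕ => 1 - ((beta k : ℝ)) / (k : ℝ) ^ 3) Filter.atTop
      (nhds (7 / 12)) := by
  have hinv : Filter.Tendsto (fun k : ℕ => (1 : ℝ) / k) Filter.atTop (nhds 0) :=
    tendsto_one_div_atTop_nhds_zero_nat
  have hlow : Filter.Tendsto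
      (fun k : ℕ => 5 / 12 + 3 / 8 * (1 / (k : ℝ)) + 1 / 12 * (1 / (k : ℝ)) ^ 2)
      Filter.atTop (nhds (5 / 12)) := by
    have := (tendsto_const_nhds (x := (5/12 : ℝ)) (f := Filter.atTop (α := ℕ))).add
      ((hinv.const_mul (3/8)).add ((hinv.pow 2).const_mul (1/12)))
    simpa using this.congr (fun k => by ring)
  have hup : Filter.Tendsto
      (fun k : ℕ => 5 / 12 + 3 / 8 * (1 / (k : ℝ)) + 1 / 12 * (1 / (k : ℝ)) ^ 2
        + 1 / 8 * (1 / (k : ℝ)) ^ 3)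
      Filter.atTop (nhds (5 / 12)) := by
    have := hlow.add ((hinv.pow 3).const_mul (1/8))
    simpa using this.congr (fun k => by ring)
  have key : ∀ k : ℕ, 1 ≤ k →
      (5 / 12 + 3 / 8 * (1 / (k : ℝ)) + 1 / 12 * (1 / (k : ℝ)) ^ 2 ≤ (beta k : ℝ) / (k : ℝ) ^ 3
      ∧ (beta k : ℝ) / (k : ℝ) ^ 3 ≤ 5 / 12 + 3 / 8 * (1 / (k : ℝ)) + 1 / 12 * (1 / (k : ℝ)) ^ 2
        + 1 / 8 * (1 / (k : ℝ)) ^ 3) := by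
    intro k hk
    have hk0 : (0 : ℝ) < (k : ℝ) := by exact_mod_cast hk
    have hk0' : (k : ℝ) ≠ 0 := ne_of_gt hk0
    have hb := beta_formula k
    have hcube : (0 : ℝ) < 1 / 8 * (1 / (k : ℝ)) ^ 3 := by positivity
    by_cases hpar : Even k
    · rw [if_pos hpar] at hb
      have hbr : (beta k : ℝ) / (k : ℝ) ^ 3
          = 5 / 12 + 3 / 8 * (1 / (k : ℝ)) + 1 / 12 * (1 / (k : ℝ)) ^ 2 := by
        rw [show (beta k : ℝ) = (10 * k ^ 3 + 9 * k ^ 2 + 2 * k + 0) / 24 by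
          rw [hb]; push_cast; ring]
        field_simp
        ring
      exact ⟨le_of_eq hbr.symm, by rw [hbr]; linarith⟩
    · rw [if_neg hpar] at hb
      have hbr : (beta k : ℝ) / (k : ℝ) ^ 3
          = 5 / 12 + 3 / 8 * (1 / (k : ℝ)) + 1 / 12 * (1 / (k : ℝ)) ^ 2
            + 1 / 8 * (1 / (k : ℝ)) ^ 3 := by
        rw [show (beta k : ℝ) = (10 * k ^ 3 + 9 * k ^ 2 + 2 * k + 3) / 24 by
          rw [hb]; push_cast; ring]
        field_simp
        ring
      exact ⟨by rw [hbr]; linarith, le_of_eq hbr⟩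
  have h1 : Filter.Tendsto (fun k : ℕ => ((beta k : ℝ)) / (k : ℝ) ^ 3) Filter.atTop
      (nhds (5 / 12)) := by
    refine tendsto_of_tendsto_of_tendsto_of_le_of_le' hlow hup ?_ ?_
    · filter_upwards [Filter.eventually_ge_atTop 1] with k hk using (key k hk).1
    · filter_upwards [Filter.eventually_ge_atTop 1] with k hk using (key k hk).2
  refine ⟨h1, ?_⟩
  have h7 : (7 : ℝ) / 12 = 1 - 5 / 12 := by norm_num
  rw [h7]
  exact h1.const_sub 1
end

section
/- Suppose n ≥ 7 and p₁, p₂, p₃, p₄ are nonnegative rationals satisfying (n-3)·p₁ + 3·p₂ = 1, p₁ + 2p₃ ≤ 1, and p₂ + 2p₄ ≤ 1. Then min((p₃+1)/2, (p₄+1)/2) ≤ (3n-1)/(4n). -/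
/-!
Since `(n - 3) p₁ + 3 p₂ = 1` is a weighted sum with total weight `n`, one of `p₁, p₂` is at
least `1 / n`; the matching constraint `pᵢ + 2 pⱼ ≤ 1` then gives
`(pⱼ + 1) / 2 ≤ (3 - 1 / n) / 4 = (3n - 1) / (4n)`.
-/

section

variable {K : Type*} [Field K] [LinearOrder K] [IsStrictOrderedRing K]

theorem inv_add_le_max_of_mul_add_mul_eq_one {a b x y : K} (ha : 0 ≤ a) (hb : 0 ≤ b)
    (hab : 0 < a + b) (h : a * x + b * y = 1) : (a + b)⁻¹ ≤ max x y := by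
  rw [inv_le_iff_one_le_mul₀' hab, ← h, add_mul]
  gcongr
  exacts [le_max_left x y, le_max_right x y]

theorem min_half_add_one_le_of_add_two_mul_le_one {p₁ p₂ p₃ p₄ : K}
    (h₁ : p₁ + 2 * p₃ ≤ 1) (h₂ : p₂ + 2 * p₄ ≤ 1) :
    min ((p₃ + 1) / 2) ((p₄ + 1) / 2) ≤ (3 - max p₁ p₂) / 4 := by
  rcases le_total p₁ p₂ with h | h
  · rw [max_eq_right h]
    exact (min_le_right _ _).trans (by linarith)
  · rw [max_eq_left h]
    exact (min_le_left _ _).trans (by linarith)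

end

theorem stmt18_general (n : ℕ) (hn : 7 ≤ n) (p₁ p₂ p₃ p₄ : ℚ)
    (e₁ : ((n : ℚ) - 3) * p₁ + 3 * p₂ = 1)
    (e₂ : p₁ + 2 * p₃ ≤ 1) (e₃ : p₂ + 2 * p₄ ≤ 1) :
    min ((p₃ + 1) / 2) ((p₄ + 1) / 2) ≤ (3 * (n : ℚ) - 1) / (4 * (n : ℚ)) := by
  have hn : (7 : ℚ) ≤ n := by exact_mod_cast hn
  have hmax : (n : ℚ)⁻¹ ≤ max p₁ p₂ := by
    simpa using inv_add_le_max_of_mul_add_mul_eq_one (by linarith) (by norm_num)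
      (by linarith) e₁
  calc min ((p₃ + 1) / 2) ((p₄ + 1) / 2) ≤ (3 - max p₁ p₂) / 4 :=
        min_half_add_one_le_of_add_two_mul_le_one e₂ e₃
    _ ≤ (3 - (n : ℚ)⁻¹) / 4 := by linarith
    _ = (3 * n - 1) / (4 * n) := by field_simp

theorem stmt18 (n : ℕ) (hn : 7 ≤ n) (p₁ p₂ p₃ p₄ : ℚ)
    (h₁ : 0 ≤ p₁) (h₂ : 0 ≤ p₂) (h₃ : 0 ≤ p₃) (h₄ : 0 ≤ p₄)
    (e₁ : ((n : ℚ) - 3) * p₁ + 3 * p₂ = 1)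
    (e₂ : p₁ + 2 * p₃ ≤ 1) (e₃ : p₂ + 2 * p₄ ≤ 1) :
    min ((p₃ + 1) / 2) ((p₄ + 1) / 2) ≤ (3 * (n : ℚ) - 1) / (4 * (n : ℚ)) :=
  stmt18_general n hn p₁ p₂ p₃ p₄ e₁ e₂ e₃
end
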